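/- arXiv:2404.17116 — 2 statements merged into one kernel-verified Lean document; each statement's English description precedes it below -/
import Mathlib

section
/- For every graph G there is a graph H (obtained by expanding each ray-edge-dominating vertex v to a complete graph on d(v) vertices, with each edge formerly incident to v attached to a distinct vertex of the clique) such that the edge-end space Ω_E(G) is homeomorphic to the end space Ω(H); moreover, every vertex of H edge-dominates at most one end of H. -/
open SimpleGraph

universe u

/-- A ray (one-way infinite path) in a graph. -/
structure GraphRay {V : Type u} (G : SimpleGraph V) : Type u where
  f : ℕ → V
  inj : Function.Injective f
  adj : ∀ n : ℕ, G.Adj (f n) (f (n + 1))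

/-- The graph `G - S`: delete a set of vertices (they become isolated). -/
def SimpleGraph.vDel {V : Type u} (G : SimpleGraph V) (S : Set V) : SimpleGraph V where
  Adj u v := G.Adj u v ∧ u ∉ S ∧ v ∉ S
  symm := ⟨fun u v h => ⟨h.1.symm, h.2.2, h.2.1⟩⟩
  loopless := ⟨fun v h => G.loopless.irrefl v h.1⟩

/-- The graph `G - F`: delete a set of edges. -/
def SimpleGraph.eDel {V : Type u} (G : SimpleGraph V) (F : Set (Sym2 V)) : SimpleGraph V where
  Adj u v := G.Adj u v ∧ s(u, v) ∉ F
  symm := ⟨fun u v h => ⟨h.1.symm, by rw [Sym2.eq_swap]; exact h.2⟩⟩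
  loopless := ⟨fun v h => G.loopless.irrefl v h.1⟩

/-- Tails of the rays `r` and `s` lie in the same connected component of `G - S`. -/
def GraphRay.VConn {V : Type u} (G : SimpleGraph V) (S : Set V) (r s : GraphRay G) : Prop :=
  ∃ N M : ℕ, (∀ n, N ≤ n → r.f n ∉ S) ∧ (∀ m, M ≤ m → s.f m ∉ S) ∧
    (G.vDel S).Reachable (r.f N) (s.f M)

/-- Tails of the rays `r` and `s` lie in the same connected component of `G - F`. -/
def GraphRay.EConn {V : Type u} (G : SimpleGraph V) (F : Set (Sym2 V)) (r s : GraphRay G) : Prop :=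
  ∃ N M : ℕ, (∀ n, N ≤ n → s(r.f n, r.f (n + 1)) ∉ F) ∧
    (∀ m, M ≤ m → s(s.f m, s.f (m + 1)) ∉ F) ∧
    (G.eDel F).Reachable (r.f N) (s.f M)

/-- The end relation: no finite vertex set separates the two rays. -/
def endEquiv {V : Type u} (G : SimpleGraph V) (r s : GraphRay G) : Prop :=
  ∀ S : Set V, S.Finite → GraphRay.VConn G S r s

/-- The edge-end relation: no finite edge set separates the two rays. -/
def edgeEndEquiv {V : Type u} (G : SimpleGraph V) (r s : GraphRay G) : Prop :=
  ∀ F : Set (Sym2 V), F.Finite → F ⊆ G.edgeSet → GraphRay.EConn G F r s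

/-- `v` dominates the ray `r`: no finite vertex set avoiding `v` separates `v` from a tail of `r`. -/
def dominates {V : Type u} (G : SimpleGraph V) (v : V) (r : GraphRay G) : Prop :=
  ∀ S : Set V, S.Finite → v ∉ S →
    ∃ N : ℕ, (∀ n, N ≤ n → r.f n ∉ S) ∧ (G.vDel S).Reachable v (r.f N)

/-- `v` edge-dominates the ray `r`: no finite edge set separates `v` from a tail of `r`. -/
def edgeDominates {V : Type u} (G : SimpleGraph V) (v : V) (r : GraphRay G) : Prop :=
  ∀ F : Set (Sym2 V), F.Finite → F ⊆ G.edgeSet →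
    ∃ N : ℕ, (∀ n, N ≤ n → s(r.f n, r.f (n + 1)) ∉ F) ∧ (G.eDel F).Reachable v (r.f N)

/-- The end space of `G` as a quotient of the set of rays. -/
def EndSpace {V : Type u} (G : SimpleGraph V) : Type u := Quot (endEquiv G)

/-- The edge-end space of `G` as a quotient of the set of rays. -/
def EdgeEndSpace {V : Type u} (G : SimpleGraph V) : Type u := Quot (edgeEndEquiv G)

/-- The end topology, generated by the sets `Ω(S, [r])` for finite `S ⊆ V(G)`. -/
instance {V : Type u} (G : SimpleGraph V) : TopologicalSpace (EndSpace G) :=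
  TopologicalSpace.generateFrom
    {O | ∃ (S : Set V) (_ : S.Finite) (r : GraphRay G),
      O = {x | ∃ s : GraphRay G, x = Quot.mk (endEquiv G) s ∧ GraphRay.VConn G S r s}}

/-- The edge-end topology, generated by the sets `Ω_E(F, [r]_E)` for finite `F ⊆ E(G)`. -/
instance {V : Type u} (G : SimpleGraph V) : TopologicalSpace (EdgeEndSpace G) :=
  TopologicalSpace.generateFrom
    {O | ∃ (F : Set (Sym2 V)) (_ : F.Finite) (_ : F ⊆ G.edgeSet) (r : GraphRay G),
      O = {x | ∃ s : GraphRay G, x = Quot.mk (edgeEndEquiv G) s ∧ GraphRay.EConn G F r s}}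


/-!
Replace every vertex `v` that edge-dominates a ray by a clique and attach each edge at `v` to its
own vertex of that clique; call the result `H`. A ray `a` of `G` lifts to a ray of `H` running
through the cliques along `a`. Conversely, a ray of `H` either meets one clique, at `v` say,
infinitely often, and is then equivalent to the lift of a ray that `v` edge-dominates, or it
meets every clique finitely often and then contains the lift of a ray of `G`.

Finite edge cuts of `G` and finite vertex cuts of `H` can be traded for each other: an edge is
replaced by its attachment vertices, and conversely an attachment vertex by its edge, while a
vertex `(x, x)` with `x` edge-dominating nothing is replaced by a finite edge set separating `x`
from the ray under consideration. So lifting is a homeomorphism `Ω_E(G) ≃ₜ Ω(H)`. The same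
translation shows that two rays of `H` not separated by finite edge sets are not separated by
finite vertex sets either, so no vertex of `H` edge-dominates two distinct ends.
-/

lemma finite_setOf_mk_mem {V : Type u} {F : Set (Sym2 V)} (hF : F.Finite) :
    {p : V × V | s(p.1, p.2) ∈ F}.Finite := by
  refine hF.preimage' (f := Sym2.mk.uncurry) fun e _ => ?_
  induction e using Sym2.ind with
  | _ x y =>
    refine (Set.toFinite {(x, y), (y, x)}).subset fun p hp => ?_
    rcases Sym2.mk_eq_mk_iff.1 (show s(p.1, p.2) = s((x, y).1, (x, y).2) from hp)
      with rfl | rfl <;> simp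

namespace SimpleGraph

lemma Reachable.map_of_adj {W W' : Type*} {K : SimpleGraph W} {K' : SimpleGraph W'} (f : W → W')
    (hf : ∀ x y, K.Adj x y → f x = f y ∨ K'.Adj (f x) (f y)) {x y : W} (h : K.Reachable x y) :
    K'.Reachable (f x) (f y) := by
  rw [reachable_iff_reflTransGen] at h ⊢
  refine Relation.ReflTransGen.lift' f (fun x y hxy => ?_) _ _ h
  rcases hf x y hxy with hfxy | hfxy
  · show Relation.ReflTransGen _ (f x) (f y)
    exact hfxy ▸ .refl
  · exact .single hfxy

lemma eDel_anti {V : Type u} (G : SimpleGraph V) {F F' : Set (Sym2 V)} (h : F ⊆ F') :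
    G.eDel F' ≤ G.eDel F :=
  fun _ _ huv => ⟨huv.1, fun he => huv.2 (h he)⟩

def edgeVerts {V : Type u} (F : Set (Sym2 V)) : Set V := {x | ∃ y, s(x, y) ∈ F}

lemma edgeVerts_finite {V : Type u} {F : Set (Sym2 V)} (hF : F.Finite) : (edgeVerts F).Finite :=
  ((finite_setOf_mk_mem hF).image Prod.fst).subset fun x ⟨y, hy⟩ => ⟨(x, y), hy, rfl⟩

lemma vDel_edgeVerts_le_eDel {V : Type u} (G : SimpleGraph V) (F : Set (Sym2 V)) :
    G.vDel (edgeVerts F) ≤ G.eDel F :=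
  fun _ v huv => ⟨huv.1, fun he => huv.2.1 ⟨v, he⟩⟩

end SimpleGraph

namespace GraphRay

variable {V : Type u} {G : SimpleGraph V}

/-- The common shape of `VConn G S` (with `K = G - S`) and `EConn G F` (with `K = G - F`). -/
def TailConn (K : SimpleGraph V) (r s : GraphRay G) : Prop :=
  ∃ N M, (∀ n ≥ N, K.Adj (r.f n) (r.f (n + 1))) ∧ (∀ m ≥ M, K.Adj (s.f m) (s.f (m + 1))) ∧
    K.Reachable (r.f N) (s.f M)

lemma exists_tail_notMem (r : GraphRay G) {S : Set V} (hS : S.Finite) :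
    ∃ N, ∀ n ≥ N, r.f n ∉ S := by
  obtain ⟨N, hN⟩ := (hS.preimage r.inj.injOn).bddAbove
  exact ⟨N + 1, fun n hn hmem => by have := hN hmem; omega⟩

lemma exists_tail_vDel (r : GraphRay G) {S : Set V} (hS : S.Finite) :
    ∃ N, ∀ n ≥ N, (G.vDel S).Adj (r.f n) (r.f (n + 1)) :=
  let ⟨N, hN⟩ := r.exists_tail_notMem hS
  ⟨N, fun n hn => ⟨r.adj n, hN n hn, hN (n + 1) (by omega)⟩⟩

lemma exists_tail_eDel (r : GraphRay G) {F : Set (Sym2 V)} (hF : F.Finite) :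
    ∃ N, ∀ n ≥ N, (G.eDel F).Adj (r.f n) (r.f (n + 1)) :=
  let ⟨N, hN⟩ := r.exists_tail_vDel (edgeVerts_finite hF)
  ⟨N, fun n hn => vDel_edgeVerts_le_eDel G F (hN n hn)⟩

lemma reachable_of_tail {K : SimpleGraph V} (r : GraphRay G) {N m : ℕ}
    (hK : ∀ n ≥ N, K.Adj (r.f n) (r.f (n + 1))) (hm : N ≤ m) :
    K.Reachable (r.f N) (r.f m) := by
  induction m, hm using Nat.le_induction with
  | base => rfl
  | succ m hNm ih => exact ih.trans (hK m hNm).reachable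

namespace TailConn

variable {K : SimpleGraph V} {r s t : GraphRay G}

lemma exists_reachable (h : TailConn K r s) :
    ∃ N, ∀ m ≥ N, ∀ n ≥ N, K.Reachable (r.f m) (s.f n) := by
  obtain ⟨N, M, hr, hs, hrs⟩ := h
  exact ⟨max N M, fun m hm n hn =>
    ((r.reachable_of_tail hr (by omega)).symm.trans hrs).trans (s.reachable_of_tail hs (by omega))⟩

lemma of_frequently (hr : ∃ N, ∀ n ≥ N, K.Adj (r.f n) (r.f (n + 1)))
    (hs : ∃ N, ∀ n ≥ N, K.Adj (s.f n) (s.f (n + 1)))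
    (h : ∀ N, ∃ m ≥ N, ∃ n ≥ N, K.Reachable (r.f m) (s.f n)) : TailConn K r s := by
  obtain ⟨Nr, hr⟩ := hr
  obtain ⟨Ns, hs⟩ := hs
  obtain ⟨m, hm, n, hn, hmn⟩ := h (max Nr Ns)
  exact ⟨m, n, fun k hk => hr k (by omega), fun k hk => hs k (by omega), hmn⟩

lemma refl (hr : ∃ N, ∀ n ≥ N, K.Adj (r.f n) (r.f (n + 1))) : TailConn K r r :=
  let ⟨N, hN⟩ := hr
  ⟨N, N, hN, hN, .rfl⟩

lemma symm (h : TailConn K r s) : TailConn K s r :=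
  let ⟨N, M, hr, hs, hrs⟩ := h
  ⟨M, N, hs, hr, hrs.symm⟩

lemma trans (h₁ : TailConn K r s) (h₂ : TailConn K s t) : TailConn K r t := by
  obtain ⟨N₁, hrs⟩ := h₁.exists_reachable
  obtain ⟨N₂, hst⟩ := h₂.exists_reachable
  obtain ⟨Nr, -, hr, -⟩ := h₁
  obtain ⟨-, Nt, -, ht, -⟩ := h₂
  refine of_frequently ⟨Nr, hr⟩ ⟨Nt, ht⟩ fun N => ?_
  set m := max N (max N₁ N₂)
  exact ⟨m, by omega, m, by omega,
    (hrs m (by omega) m (by omega)).trans (hst m (by omega) m (by omega))⟩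

lemma mono {K' : SimpleGraph V} (h : TailConn K r s) (hK : K ≤ K') : TailConn K' r s :=
  let ⟨N, M, hr, hs, hrs⟩ := h
  ⟨N, M, fun n hn => hK (hr n hn), fun m hm => hK (hs m hm), hrs.mono hK⟩

end TailConn

lemma vConn_iff_tailConn {S : Set V} {r s : GraphRay G} :
    VConn G S r s ↔ TailConn (G.vDel S) r s := by
  constructor
  · rintro ⟨N, M, hr, hs, hrs⟩
    exact ⟨N, M, fun n hn => ⟨r.adj n, hr n hn, hr (n + 1) (by omega)⟩,
      fun m hm => ⟨s.adj m, hs m hm, hs (m + 1) (by omega)⟩, hrs⟩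
  · rintro ⟨N, M, hr, hs, hrs⟩
    exact ⟨N, M, fun n hn => (hr n hn).2.1, fun m hm => (hs m hm).2.1, hrs⟩

lemma eConn_iff_tailConn {F : Set (Sym2 V)} {r s : GraphRay G} :
    EConn G F r s ↔ TailConn (G.eDel F) r s := by
  constructor
  · rintro ⟨N, M, hr, hs, hrs⟩
    exact ⟨N, M, fun n hn => ⟨r.adj n, hr n hn⟩, fun m hm => ⟨s.adj m, hs m hm⟩, hrs⟩
  · rintro ⟨N, M, hr, hs, hrs⟩
    exact ⟨N, M, fun n hn => (hr n hn).2, fun m hm => (hs m hm).2, hrs⟩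

/-- The ray jumps from each vertex to the step after its last visit. -/
lemma exists_subseq_of_finite_fibers {W : Type u} {K : SimpleGraph W} (g : ℕ → W)
    (hstep : ∀ n, g n = g (n + 1) ∨ K.Adj (g n) (g (n + 1)))
    (hfin : ∀ w, {n | g n = w}.Finite) :
    ∃ (r : GraphRay K) (σ : ℕ → ℕ), StrictMono σ ∧ ∀ k, r.f k = g (σ k) := by
  have hlast : ∀ i, ∃ m, i ≤ m ∧ g m = g i ∧ ∀ k, m < k → g k ≠ g i := by
    intro i
    obtain ⟨m, hm, hmax⟩ := Set.exists_max_image _ id (hfin (g i)) ⟨i, rfl⟩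
    exact ⟨m, hmax i rfl, hm, fun k hk hgk => absurd (hmax k hgk) (by simpa using hk)⟩
  choose last hle hval hgt using hlast
  let τ : ℕ → ℕ := fun k => Nat.rec 0 (fun _ t => last t + 1) k
  have hτ : ∀ k, τ (k + 1) = last (τ k) + 1 := fun _ => rfl
  have hσ : StrictMono fun k => last (τ k) :=
    strictMono_nat_of_lt_succ fun k => by have := hle (τ (k + 1)); have := hτ k; omega
  have hne : ∀ k m, last (τ k) < m → g m ≠ g (last (τ k)) :=
    fun k m hm => (hval (τ k)).symm ▸ hgt _ m hm
  refine ⟨⟨fun k => g (last (τ k)), fun k l hkl => ?_, fun k => ?_⟩, _, hσ, fun _ => rfl⟩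
  · by_contra hkl'
    rcases Nat.lt_or_gt_of_ne hkl' with h | h
    · exact hne k _ (hσ h) hkl.symm
    · exact hne l _ (hσ h) hkl
  · show K.Adj (g (last (τ k))) (g (last (τ (k + 1))))
    rw [hval (τ (k + 1)), hτ]
    exact (hstep _).resolve_left fun h => hne k _ (Nat.lt_succ_self _) h.symm

end GraphRay

open GraphRay

section Equivalences

variable {V : Type u} {G : SimpleGraph V} {S : Set V} {F : Set (Sym2 V)} {r s t : GraphRay G}

lemma GraphRay.VConn.refl (hS : S.Finite) (r : GraphRay G) : VConn G S r r :=
  vConn_iff_tailConn.2 (.refl (r.exists_tail_vDel hS))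

lemma GraphRay.VConn.symm (h : VConn G S r s) : VConn G S s r :=
  vConn_iff_tailConn.2 (vConn_iff_tailConn.1 h).symm

lemma GraphRay.VConn.trans (h₁ : VConn G S r s) (h₂ : VConn G S s t) : VConn G S r t :=
  vConn_iff_tailConn.2 ((vConn_iff_tailConn.1 h₁).trans (vConn_iff_tailConn.1 h₂))

lemma GraphRay.EConn.refl (hF : F.Finite) (r : GraphRay G) : EConn G F r r :=
  eConn_iff_tailConn.2 (.refl (r.exists_tail_eDel hF))

lemma GraphRay.EConn.symm (h : EConn G F r s) : EConn G F s r :=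
  eConn_iff_tailConn.2 (eConn_iff_tailConn.1 h).symm

lemma GraphRay.EConn.trans (h₁ : EConn G F r s) (h₂ : EConn G F s t) : EConn G F r t :=
  eConn_iff_tailConn.2 ((eConn_iff_tailConn.1 h₁).trans (eConn_iff_tailConn.1 h₂))

lemma endEquiv_equivalence : Equivalence (endEquiv G) where
  refl r _ hS := .refl hS r
  symm h S hS := (h S hS).symm
  trans h₁ h₂ S hS := (h₁ S hS).trans (h₂ S hS)

lemma edgeEndEquiv_equivalence : Equivalence (edgeEndEquiv G) where
  refl r _ hF _ := .refl hF r
  symm h F hF hFG := (h F hF hFG).symm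
  trans h₁ h₂ F hF hFG := (h₁ F hF hFG).trans (h₂ F hF hFG)

lemma edgeEndEquiv_of_endEquiv (h : endEquiv G r s) : edgeEndEquiv G r s := fun F hF _ =>
  eConn_iff_tailConn.2 <|
    (vConn_iff_tailConn.1 (h _ (edgeVerts_finite hF))).mono (vDel_edgeVerts_le_eDel G F)

lemma edgeEndEquiv_of_edgeDominates {v : V} (hr : edgeDominates G v r)
    (hs : edgeDominates G v s) : edgeEndEquiv G r s := fun F hF hFG =>
  let ⟨N, hN, hvr⟩ := hr F hF hFG
  let ⟨M, hM, hvs⟩ := hs F hF hFG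
  ⟨N, M, hN, hM, hvr.symm.trans hvs⟩

end Equivalences

section CliqueExpansion

variable {V : Type u} (G : SimpleGraph V)

def edgeDominatingVerts : Set V := {v | ∃ r : GraphRay G, edgeDominates G v r}

open Classical in
noncomputable def attach (v w : V) : V := if v ∈ edgeDominatingVerts G then w else v

/-- For edge-dominating `v` the pairs `(v, w)` form a clique and the edge `vw` of `G` is attached
to `(v, w)`; any other `v` is kept as the single vertex `(v, v)`, the pairs `(v, w)` with `w ≠ v`
being isolated. The clique at `v` thus has `|V|` vertices instead of the paper's `d(v)`; both are
infinite, since an edge-dominating vertex has infinite degree. -/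
def cliqueExpansion : SimpleGraph (V × V) where
  Adj p q := (p.1 = q.1 ∧ p.1 ∈ edgeDominatingVerts G ∧ p.2 ≠ q.2) ∨
    (G.Adj p.1 q.1 ∧ p.2 = attach G p.1 q.1 ∧ q.2 = attach G q.1 p.1)
  symm := ⟨by
    rintro p q (⟨h1, h2, h3⟩ | ⟨h1, h2, h3⟩)
    · exact .inl ⟨h1.symm, h1 ▸ h2, h3.symm⟩
    · exact .inr ⟨h1.symm, h3, h2⟩⟩
  loopless := ⟨by
    rintro p (⟨-, -, h⟩ | ⟨h, -, -⟩)
    · exact h rfl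
    · exact G.loopless.irrefl _ h⟩

/-- `p` belongs to the clique replacing `p.1`; every other pair is an isolated vertex. -/
def IsPort (p : V × V) : Prop := p.1 ∈ edgeDominatingVerts G ∨ p.2 = p.1

variable {G}

lemma isPort_attach (v w : V) : IsPort G (v, attach G v w) := by
  unfold attach
  split_ifs with hv
  · exact .inl hv
  · exact .inr rfl

lemma cliqueExpansion_adj_attach {x y : V} (h : G.Adj x y) :
    (cliqueExpansion G).Adj (x, attach G x y) (y, attach G y x) :=
  .inr ⟨h, rfl, rfl⟩

lemma cliqueExpansion_adj_fst {p q : V × V} (h : (cliqueExpansion G).Adj p q) :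
    p.1 = q.1 ∨ G.Adj p.1 q.1 :=
  h.imp (·.1) (·.1)

lemma IsPort.of_adj {p q : V × V} (h : (cliqueExpansion G).Adj p q) : IsPort G p := by
  rcases h with ⟨-, hp, -⟩ | ⟨-, hp, -⟩
  · exact .inl hp
  · rw [show p = (p.1, attach G p.1 q.1) from Prod.ext rfl hp]
    exact isPort_attach _ _

lemma GraphRay.isPort (r : GraphRay (cliqueExpansion G)) (n : ℕ) : IsPort G (r.f n) :=
  .of_adj (r.adj n)

lemma IsPort.eq_or_adj {p q : V × V} (hp : IsPort G p) (hq : IsPort G q) (h : p.1 = q.1) :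
    p = q ∨ (cliqueExpansion G).Adj p q := by
  by_cases hD : p.1 ∈ edgeDominatingVerts G
  · by_cases h2 : p.2 = q.2
    · exact .inl (Prod.ext h h2)
    · exact .inr (.inl ⟨h, hD, h2⟩)
  · have hq' := hq.resolve_left (h ▸ hD)
    exact .inl (Prod.ext h (by rw [hp.resolve_left hD, hq', h]))

lemma IsPort.reachable_vDel {p q : V × V} {S : Set (V × V)} (hp : IsPort G p) (hq : IsPort G q)
    (h : p.1 = q.1) (hpS : p ∉ S) (hqS : q ∉ S) : ((cliqueExpansion G).vDel S).Reachable p q := by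
  rcases hp.eq_or_adj hq h with rfl | hpq
  · rfl
  · exact Adj.reachable ⟨hpq, hpS, hqS⟩

end CliqueExpansion

section RayLift

variable {V : Type u} {G : SimpleGraph V}

/-- The attachment points along `a`: `2k` is where the edge from `a (k-1)` enters the clique at
`a k` (for `k = 0` the truncated `0 - 1` gives a harmless junk value), and `2k+1` where the edge
to `a (k+1)` leaves it. Consecutive terms are equal or adjacent. -/
noncomputable def portSeq (a : GraphRay G) (n : ℕ) : V × V :=
  (a.f (n / 2), attach G (a.f (n / 2)) (a.f (if n % 2 = 0 then n / 2 - 1 else n / 2 + 1)))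

lemma portSeq_eq_or_adj (a : GraphRay G) (n : ℕ) :
    portSeq a n = portSeq a (n + 1) ∨
      (cliqueExpansion G).Adj (portSeq a n) (portSeq a (n + 1)) := by
  obtain ⟨k, rfl | rfl⟩ := Nat.even_or_odd' n
  · exact (isPort_attach _ _).eq_or_adj (isPort_attach _ _)
      (congrArg a.f (by omega : 2 * k / 2 = (2 * k + 1) / 2))
  · right
    have hodd : (2 * k + 1) / 2 = k ∧ (2 * k + 1) % 2 = 1 := by omega
    have heven : (2 * k + 1 + 1) / 2 = k + 1 ∧ (2 * k + 1 + 1) % 2 = 0 := by omega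
    simp only [portSeq, hodd, heven, if_true, Nat.add_sub_cancel, one_ne_zero, if_false]
    exact cliqueExpansion_adj_attach (a.adj k)

lemma finite_portSeq_fiber (a : GraphRay G) (p : V × V) : {n | portSeq a n = p}.Finite := by
  have hk : {k | a.f k = p.1}.Finite := (Set.finite_singleton p.1).preimage a.inj.injOn
  refine (hk.preimage' (f := (· / 2)) fun k _ =>
    (Set.finite_Iic (2 * k + 1)).subset fun n hn => ?_).subset fun n hn => ?_
  · simp only [Set.mem_preimage, Set.mem_singleton_iff] at hn
    simp only [Set.mem_Iic]
    omega
  · exact congrArg Prod.fst hn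

noncomputable def rayLift (a : GraphRay G) : GraphRay (cliqueExpansion G) :=
  (GraphRay.exists_subseq_of_finite_fibers _ (portSeq_eq_or_adj a) (finite_portSeq_fiber a)).choose

lemma exists_rayLift_fst (a : GraphRay G) :
    ∃ κ : ℕ → ℕ, ∀ m, m ≤ 2 * κ m + 1 ∧ ((rayLift a).f m).1 = a.f (κ m) := by
  obtain ⟨σ, hσ, hlift⟩ := (GraphRay.exists_subseq_of_finite_fibers _ (portSeq_eq_or_adj a)
    (finite_portSeq_fiber a)).choose_spec
  refine ⟨fun m => σ m / 2, fun m => ⟨?_, by rw [rayLift, hlift]; rfl⟩⟩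
  have := hσ.le_apply (x := m)
  dsimp only
  omega

end RayLift

section Cuts

variable {V : Type u} {G : SimpleGraph V}

lemma exists_sepEdges {x : V} (hx : x ∉ edgeDominatingVerts G) (a : GraphRay G) :
    ∃ F : Set (Sym2 V), F.Finite ∧ F ⊆ G.edgeSet ∧
      ∀ N, (∀ n, N ≤ n → s(a.f n, a.f (n + 1)) ∉ F) → ¬ (G.eDel F).Reachable x (a.f N) := by
  by_contra h
  push Not at h
  exact hx ⟨a, h⟩

open Classical in
noncomputable def sepEdges (x : V) (a : GraphRay G) : Set (Sym2 V) :=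
  if hx : x ∈ edgeDominatingVerts G then ∅ else (exists_sepEdges hx a).choose

lemma sepEdges_finite (x : V) (a : GraphRay G) : (sepEdges x a).Finite := by
  unfold sepEdges
  split_ifs with hx
  · exact Set.finite_empty
  · exact (exists_sepEdges hx a).choose_spec.1

lemma sepEdges_subset (x : V) (a : GraphRay G) : sepEdges x a ⊆ G.edgeSet := by
  unfold sepEdges
  split_ifs with hx
  · exact Set.empty_subset _
  · exact (exists_sepEdges hx a).choose_spec.2.1

lemma not_reachable_sepEdges {x : V} (hx : x ∉ edgeDominatingVerts G) (a : GraphRay G) {N : ℕ}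
    (ha : ∀ n, N ≤ n → s(a.f n, a.f (n + 1)) ∉ sepEdges x a) :
    ¬ (G.eDel (sepEdges x a)).Reachable x (a.f N) := by
  unfold sepEdges at ha ⊢
  rw [dif_neg hx] at ha ⊢
  exact (exists_sepEdges hx a).choose_spec.2.2 N ha

variable (G) in
/-- The vertices `x` whose only vertex `(x, x)` in `cliqueExpansion G` lies in `S`. -/
def blockedVerts (S : Set (V × V)) : Set V := {x | x ∉ edgeDominatingVerts G ∧ (x, x) ∈ S}

variable (G) in
def attachedEdges (S : Set (V × V)) : Set (Sym2 V) :=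
  {e | ∃ p ∈ S, G.Adj p.1 p.2 ∧ e = s(p.1, p.2)}

/-- Removing `edgeCut S a` from `G` separates whatever removing `S` separates in
`cliqueExpansion G`, as far as the part of `G` joined to the tails of `a` is concerned. -/
noncomputable def edgeCut (S : Set (V × V)) (a : GraphRay G) : Set (Sym2 V) :=
  attachedEdges G S ∪ ⋃ x ∈ blockedVerts G S, sepEdges x a

lemma edgeCut_finite {S : Set (V × V)} (hS : S.Finite) (a : GraphRay G) :
    (edgeCut S a).Finite := by
  refine .union ((hS.image fun p => s(p.1, p.2)).subset ?_)
    (.biUnion ?_ fun x _ => sepEdges_finite x a)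
  · rintro _ ⟨p, hp, -, rfl⟩
    exact ⟨p, hp, rfl⟩
  · exact (hS.preimage fun x _ y _ h => congrArg Prod.fst h).subset fun x hx => hx.2

lemma edgeCut_subset (S : Set (V × V)) (a : GraphRay G) : edgeCut S a ⊆ G.edgeSet := by
  refine Set.union_subset ?_ (Set.iUnion₂_subset fun x _ => sepEdges_subset x a)
  rintro _ ⟨p, -, hp, rfl⟩
  exact hp

lemma attach_notMem {S : Set (V × V)} {F : Set (Sym2 V)} (hSF : attachedEdges G S ⊆ F)
    {u y : V} (h : (G.eDel F).Adj u y) (hu : u ∉ blockedVerts G S) : (u, attach G u y) ∉ S := by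
  intro hmem
  unfold attach at hmem
  split_ifs at hmem with hD
  · exact h.2 (hSF ⟨(u, y), hmem, h.1, rfl⟩)
  · exact hu ⟨hD, hmem⟩

/-- A walk of `G - F` lifts to `cliqueExpansion G - S`: each edge is replaced by its copy between
the attachment points, and consecutive edges are joined inside the clique of their common vertex. -/
lemma reachable_vDel_of_walk {S : Set (V × V)} {F : Set (Sym2 V)} (hSF : attachedEdges G S ⊆ F)
    {u v : V} (w : (G.eDel F).Walk u v)
    (hv : ∀ x, (G.eDel F).Reachable x v → x ∉ blockedVerts G S) {p q : V × V}
    (hp : IsPort G p) (hq : IsPort G q) (hpu : p.1 = u) (hqv : q.1 = v) (hpS : p ∉ S)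
    (hqS : q ∉ S) : ((cliqueExpansion G).vDel S).Reachable p q := by
  induction w generalizing p with
  | nil => exact hp.reachable_vDel hq (hpu.trans hqv.symm) hpS hqS
  | @cons u x v h w ih =>
    have hux := attach_notMem hSF h (hv u (w.cons h).reachable)
    have hxu := attach_notMem hSF h.symm (hv x w.reachable)
    exact (hp.reachable_vDel (isPort_attach u x) hpu hpS hux).trans <|
      (Adj.reachable (G := (cliqueExpansion G).vDel S)
        ⟨cliqueExpansion_adj_attach h.1, hux, hxu⟩).trans
        (ih hv (isPort_attach x u) rfl hqv hxu)

lemma reachable_vDel_of_reachable_tail {S : Set (V × V)} {a : GraphRay G} {L : ℕ}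
    (ha : ∀ n ≥ L, (G.eDel (edgeCut S a)).Adj (a.f n) (a.f (n + 1))) {p q : V × V}
    (hp : IsPort G p) (hq : IsPort G q) (hpS : p ∉ S) (hqS : q ∉ S) (hqa : q.1 = a.f L)
    (hpq : (G.eDel (edgeCut S a)).Reachable p.1 q.1) :
    ((cliqueExpansion G).vDel S).Reachable p q := by
  obtain ⟨w⟩ := hpq
  refine reachable_vDel_of_walk Set.subset_union_left w (fun x hx hxS => ?_) hp hq rfl rfl hpS hqS
  have hsep : sepEdges x a ⊆ edgeCut S a := Set.subset_union_of_subset_right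
    (Set.subset_biUnion_of_mem (u := fun x => sepEdges x a) hxS) _
  exact not_reachable_sepEdges hxS.1 a (fun n hn he => (ha n hn).2 (hsep he))
    (hqa ▸ hx.mono (eDel_anti G hsep))

variable (G) in
def vertexCut (F : Set (Sym2 V)) : Set (V × V) :=
  (fun p => (p.1, attach G p.1 p.2)) '' {p : V × V | s(p.1, p.2) ∈ F}

variable (G) in
def liftEdges (F : Set (Sym2 V)) : Set (Sym2 (V × V)) :=
  (fun p => s((p.1, attach G p.1 p.2), (p.2, attach G p.2 p.1))) ''
    {p : V × V | s(p.1, p.2) ∈ F}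

lemma vertexCut_finite {F : Set (Sym2 V)} (hF : F.Finite) : (vertexCut G F).Finite :=
  (finite_setOf_mk_mem hF).image _

lemma liftEdges_finite {F : Set (Sym2 V)} (hF : F.Finite) : (liftEdges G F).Finite :=
  (finite_setOf_mk_mem hF).image _

lemma liftEdges_subset {F : Set (Sym2 V)} (hF : F ⊆ G.edgeSet) :
    liftEdges G F ⊆ (cliqueExpansion G).edgeSet := by
  rintro _ ⟨p, hp, rfl⟩
  exact cliqueExpansion_adj_attach (hF hp)

end Cuts

section Transfer

variable {V : Type u} {G : SimpleGraph V}

lemma vConn_rayLift_of_eConn {S : Set (V × V)} (hS : S.Finite) {a b : GraphRay G}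
    (h : EConn G (edgeCut S a) a b) : VConn (cliqueExpansion G) S (rayLift a) (rayLift b) := by
  obtain ⟨N₀, hab⟩ := (eConn_iff_tailConn.1 h).exists_reachable
  obtain ⟨Na, ha⟩ := a.exists_tail_eDel (edgeCut_finite hS a)
  obtain ⟨κa, hκa⟩ := exists_rayLift_fst a
  obtain ⟨κb, hκb⟩ := exists_rayLift_fst b
  obtain ⟨N₁, h₁⟩ := (rayLift a).exists_tail_notMem hS
  obtain ⟨N₂, h₂⟩ := (rayLift b).exists_tail_notMem hS
  refine vConn_iff_tailConn.2 <| .of_frequently ((rayLift a).exists_tail_vDel hS)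
    ((rayLift b).exists_tail_vDel hS) fun N => ?_
  set m := N + N₁ + N₂ + 2 * (N₀ + Na) + 1
  obtain ⟨hma, hfa⟩ := hκa m
  obtain ⟨hmb, hfb⟩ := hκb m
  refine ⟨m, by omega, m, by omega, (reachable_vDel_of_reachable_tail (L := κa m)
    (fun n hn => ha n (by omega))
    ((rayLift b).isPort m) ((rayLift a).isPort m) (h₂ m (by omega)) (h₁ m (by omega)) hfa ?_).symm⟩
  rw [hfa, hfb]
  exact (hab _ (by omega) _ (by omega)).symm

lemma exists_endEquiv_rayLift_of_infinite {r : GraphRay (cliqueExpansion G)} {v : V}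
    (hv : {n | (r.f n).1 = v}.Infinite) : ∃ a : GraphRay G, endEquiv _ (rayLift a) r := by
  have hD : v ∈ edgeDominatingVerts G := by
    by_contra hD
    have hvv : ∀ n, (r.f n).1 = v → r.f n = (v, v) := fun n hn =>
      Prod.ext hn (((r.isPort n).resolve_left (hn ▸ hD)).trans hn)
    exact hv (Set.Subsingleton.finite fun m hm n hn => r.inj ((hvv m hm).trans (hvv n hn).symm))
  obtain ⟨a, hdom⟩ := hD
  refine ⟨a, fun S hS => ?_⟩
  obtain ⟨N₀, ha, hva⟩ := hdom _ (edgeCut_finite hS a) (edgeCut_subset S a)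
  have ha' : ∀ n ≥ N₀, (G.eDel (edgeCut S a)).Adj (a.f n) (a.f (n + 1)) :=
    fun n hn => ⟨a.adj n, ha n hn⟩
  obtain ⟨κ, hκ⟩ := exists_rayLift_fst a
  obtain ⟨N₁, h₁⟩ := (rayLift a).exists_tail_notMem hS
  obtain ⟨N₂, h₂⟩ := r.exists_tail_notMem hS
  refine vConn_iff_tailConn.2 <| .of_frequently ((rayLift a).exists_tail_vDel hS)
    (r.exists_tail_vDel hS) fun N => ?_
  obtain ⟨n, hn, hnN⟩ := hv.exists_gt (N + N₂)
  obtain ⟨hm, hfm⟩ := hκ (N + N₁ + 2 * N₀ + 1)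
  refine ⟨N + N₁ + 2 * N₀ + 1, by omega, n, by omega, (reachable_vDel_of_reachable_tail
    (fun k hk => ha' k (by omega)) (r.isPort n) ((rayLift a).isPort _) (h₂ n (by omega))
    (h₁ _ (by omega)) hfm ?_).symm⟩
  rw [hn, hfm]
  exact hva.trans (a.reachable_of_tail ha' (by omega))

lemma endEquiv_of_frequently_fst_eq {r s : GraphRay (cliqueExpansion G)}
    (h : ∀ N, ∃ m ≥ N, ∃ n ≥ N, (r.f m).1 = (s.f n).1) : endEquiv _ r s := fun S hS => by
  obtain ⟨N₁, h₁⟩ := r.exists_tail_notMem hS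
  obtain ⟨N₂, h₂⟩ := s.exists_tail_notMem hS
  refine vConn_iff_tailConn.2 <| .of_frequently (r.exists_tail_vDel hS) (s.exists_tail_vDel hS)
    fun N => ?_
  obtain ⟨m, hm, n, hn, hmn⟩ := h (N + N₁ + N₂)
  exact ⟨m, by omega, n, by omega,
    (r.isPort m).reachable_vDel (s.isPort n) hmn (h₁ m (by omega)) (h₂ n (by omega))⟩

lemma exists_endEquiv_rayLift_of_finite {r : GraphRay (cliqueExpansion G)}
    (hr : ∀ v, {n | (r.f n).1 = v}.Finite) : ∃ a : GraphRay G, endEquiv _ (rayLift a) r := by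
  obtain ⟨a, σ, hσ, ha⟩ := GraphRay.exists_subseq_of_finite_fibers (K := G) (fun n => (r.f n).1)
    (fun n => cliqueExpansion_adj_fst (r.adj n)) hr
  obtain ⟨κ, hκ⟩ := exists_rayLift_fst a
  refine ⟨a, endEquiv_of_frequently_fst_eq fun N => ?_⟩
  obtain ⟨hm, hfm⟩ := hκ (2 * N + 1)
  exact ⟨2 * N + 1, by omega, σ (κ (2 * N + 1)), le_trans (by omega) hσ.le_apply,
    hfm.trans (ha _)⟩

lemma exists_endEquiv_rayLift (r : GraphRay (cliqueExpansion G)) :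
    ∃ a : GraphRay G, endEquiv _ (rayLift a) r := by
  by_cases h : ∃ v, {n | (r.f n).1 = v}.Infinite
  · obtain ⟨v, hv⟩ := h
    exact exists_endEquiv_rayLift_of_infinite hv
  · push Not at h
    exact exists_endEquiv_rayLift_of_finite h

/-- Walks of `cliqueExpansion G` avoiding the copies of `F` project to walks of `G - F`, and
their ends on `rayLift a`, `rayLift b` to vertices of `a`, `b`. -/
lemma eConn_of_reachable_rayLift {F : Set (Sym2 V)} (hF : F.Finite) {K : SimpleGraph (V × V)}
    (hK : ∀ p q, K.Adj p q → p.1 = q.1 ∨ (G.eDel F).Adj p.1 q.1) {a b : GraphRay G}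
    (h : ∃ N, ∀ m ≥ N, ∀ n ≥ N, K.Reachable ((rayLift a).f m) ((rayLift b).f n)) :
    EConn G F a b := by
  obtain ⟨N₀, h⟩ := h
  obtain ⟨κa, hκa⟩ := exists_rayLift_fst a
  obtain ⟨κb, hκb⟩ := exists_rayLift_fst b
  refine eConn_iff_tailConn.2 <| .of_frequently (a.exists_tail_eDel hF) (b.exists_tail_eDel hF)
    fun N => ?_
  set m := N₀ + 2 * N + 1
  obtain ⟨hma, hfa⟩ := hκa m
  obtain ⟨hmb, hfb⟩ := hκb m
  refine ⟨κa m, by omega, κb m, by omega, ?_⟩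
  rw [← hfa, ← hfb]
  exact (h m (by omega) m (by omega)).map_of_adj Prod.fst hK

lemma eConn_of_vConn_rayLift {F : Set (Sym2 V)} (hF : F.Finite) {a b : GraphRay G}
    (h : VConn (cliqueExpansion G) (vertexCut G F) (rayLift a) (rayLift b)) : EConn G F a b := by
  refine eConn_of_reachable_rayLift hF (fun p q hpq => ?_)
    (vConn_iff_tailConn.1 h).exists_reachable
  rcases hpq.1 with ⟨hpq₁, -, -⟩ | ⟨hpq₁, hp, -⟩
  · exact .inl hpq₁
  · exact .inr ⟨hpq₁, fun he => hpq.2.1 ⟨(p.1, q.1), he, Prod.ext rfl hp.symm⟩⟩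

lemma eConn_of_eConn_rayLift {F : Set (Sym2 V)} (hF : F.Finite) {a b : GraphRay G}
    (h : EConn (cliqueExpansion G) (liftEdges G F) (rayLift a) (rayLift b)) : EConn G F a b := by
  refine eConn_of_reachable_rayLift hF (fun p q hpq => ?_)
    (eConn_iff_tailConn.1 h).exists_reachable
  rcases hpq.1 with ⟨hpq₁, -, -⟩ | ⟨hpq₁, hp, hq⟩
  · exact .inl hpq₁
  · refine .inr ⟨hpq₁, fun he => hpq.2 ⟨(p.1, q.1), he, ?_⟩⟩
    show s((p.1, attach G p.1 q.1), (q.1, attach G q.1 p.1)) = s(p, q)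
    rw [← hp, ← hq]

lemma endEquiv_rayLift_of_edgeEndEquiv {a b : GraphRay G} (h : edgeEndEquiv G a b) :
    endEquiv _ (rayLift a) (rayLift b) := fun S hS =>
  vConn_rayLift_of_eConn hS (h _ (edgeCut_finite hS a) (edgeCut_subset S a))

lemma edgeEndEquiv_of_endEquiv_rayLift {a b : GraphRay G}
    (h : endEquiv _ (rayLift a) (rayLift b)) : edgeEndEquiv G a b := fun _ hF _ =>
  eConn_of_vConn_rayLift hF (h _ (vertexCut_finite hF))

lemma endEquiv_of_edgeEndEquiv_cliqueExpansion {r s : GraphRay (cliqueExpansion G)}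
    (h : edgeEndEquiv _ r s) : endEquiv _ r s := by
  obtain ⟨a, ha⟩ := exists_endEquiv_rayLift r
  obtain ⟨b, hb⟩ := exists_endEquiv_rayLift s
  have hab : edgeEndEquiv _ (rayLift a) (rayLift b) :=
    edgeEndEquiv_equivalence.trans
      (edgeEndEquiv_equivalence.trans (edgeEndEquiv_of_endEquiv ha) h)
      (edgeEndEquiv_of_endEquiv (endEquiv_equivalence.symm hb))
  have hab' : endEquiv _ (rayLift a) (rayLift b) :=
    endEquiv_rayLift_of_edgeEndEquiv fun F hF hFG =>
      eConn_of_eConn_rayLift hF (hab _ (liftEdges_finite hF) (liftEdges_subset hFG))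
  exact endEquiv_equivalence.trans
    (endEquiv_equivalence.trans (endEquiv_equivalence.symm ha) hab') hb

end Transfer

namespace EndSpace

variable {V : Type u} {G : SimpleGraph V}

def nbhd (S : Set V) (r : GraphRay G) : Set (EndSpace G) :=
  {x | ∃ s : GraphRay G, x = Quot.mk (endEquiv G) s ∧ VConn G S r s}

lemma mk_eq_mk_iff {r s : GraphRay G} :
    (Quot.mk (endEquiv G) r : EndSpace G) = Quot.mk _ s ↔ endEquiv G r s :=
  Quot.eq.trans endEquiv_equivalence.eqvGen_iff

lemma mk_mem_nbhd {S : Set V} (hS : S.Finite) {r s : GraphRay G} :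
    (Quot.mk (endEquiv G) s : EndSpace G) ∈ nbhd S r ↔ VConn G S r s :=
  ⟨fun ⟨_, hs, hr⟩ => hr.trans (mk_eq_mk_iff.1 hs.symm S hS), fun h => ⟨s, rfl, h⟩⟩

lemma isOpen_nbhd {S : Set V} (hS : S.Finite) (r : GraphRay G) : IsOpen (nbhd S r) :=
  TopologicalSpace.isOpen_generateFrom_of_mem ⟨S, hS, r, rfl⟩

end EndSpace

namespace EdgeEndSpace

variable {V : Type u} {G : SimpleGraph V}

def nbhd (F : Set (Sym2 V)) (r : GraphRay G) : Set (EdgeEndSpace G) :=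
  {x | ∃ s : GraphRay G, x = Quot.mk (edgeEndEquiv G) s ∧ EConn G F r s}

lemma mk_eq_mk_iff {r s : GraphRay G} :
    (Quot.mk (edgeEndEquiv G) r : EdgeEndSpace G) = Quot.mk _ s ↔ edgeEndEquiv G r s :=
  Quot.eq.trans edgeEndEquiv_equivalence.eqvGen_iff

lemma mk_mem_nbhd {F : Set (Sym2 V)} (hF : F.Finite) (hFG : F ⊆ G.edgeSet) {r s : GraphRay G} :
    (Quot.mk (edgeEndEquiv G) s : EdgeEndSpace G) ∈ nbhd F r ↔ EConn G F r s :=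
  ⟨fun ⟨_, hs, hr⟩ => hr.trans (mk_eq_mk_iff.1 hs.symm F hF hFG), fun h => ⟨s, rfl, h⟩⟩

lemma isOpen_nbhd {F : Set (Sym2 V)} (hF : F.Finite) (hFG : F ⊆ G.edgeSet) (r : GraphRay G) :
    IsOpen (nbhd F r) :=
  TopologicalSpace.isOpen_generateFrom_of_mem ⟨F, hF, hFG, r, rfl⟩

end EdgeEndSpace

section Homeomorph

variable {V : Type u} (G : SimpleGraph V)

noncomputable def toEndSpace : EdgeEndSpace G → EndSpace (cliqueExpansion G) :=
  Quot.lift (fun a => Quot.mk _ (rayLift a)) fun _ _ h =>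
    Quot.sound (endEquiv_rayLift_of_edgeEndEquiv h)

lemma toEndSpace_bijective : Function.Bijective (toEndSpace G) := by
  constructor
  · rintro ⟨a⟩ ⟨b⟩ h
    exact EdgeEndSpace.mk_eq_mk_iff.2
      (edgeEndEquiv_of_endEquiv_rayLift (EndSpace.mk_eq_mk_iff.1 h))
  · rintro ⟨r⟩
    obtain ⟨a, ha⟩ := exists_endEquiv_rayLift r
    exact ⟨Quot.mk _ a, Quot.sound ha⟩

noncomputable def edgeEndSpaceEquiv : EdgeEndSpace G ≃ EndSpace (cliqueExpansion G) :=
  .ofBijective _ (toEndSpace_bijective G)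

lemma continuous_edgeEndSpaceEquiv : Continuous (edgeEndSpaceEquiv G) := by
  refine continuous_generateFrom_iff.2 ?_
  rintro _ ⟨S, hS, r, rfl⟩
  refine isOpen_iff_forall_mem_open.2 fun x hx => ?_
  obtain ⟨a, rfl⟩ := Quot.exists_rep x
  have hra : VConn _ S r (rayLift a) := (EndSpace.mk_mem_nbhd hS).1 hx
  refine ⟨EdgeEndSpace.nbhd (edgeCut S a) a, ?_,
    EdgeEndSpace.isOpen_nbhd (edgeCut_finite hS a) (edgeCut_subset S a) a,
    ⟨a, rfl, .refl (edgeCut_finite hS a) a⟩⟩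
  rintro _ ⟨b, rfl, hab⟩
  exact (EndSpace.mk_mem_nbhd hS).2 (hra.trans (vConn_rayLift_of_eConn hS hab))

lemma continuous_edgeEndSpaceEquiv_symm : Continuous (edgeEndSpaceEquiv G).symm := by
  refine continuous_generateFrom_iff.2 ?_
  rintro _ ⟨F, hF, hFG, r, rfl⟩
  -- the generating sets are typed `Set (Quot _)`, so membership is restated through `nbhd`
  have hpre : ∀ x, (edgeEndSpaceEquiv G).symm x ∈ EdgeEndSpace.nbhd F r →
      x ∈ (edgeEndSpaceEquiv G).symm ⁻¹' EdgeEndSpace.nbhd F r := fun _ h => h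
  refine isOpen_iff_forall_mem_open.2 fun x hx => ?_
  obtain ⟨y, rfl⟩ := (edgeEndSpaceEquiv G).surjective x
  replace hx : (edgeEndSpaceEquiv G).symm (edgeEndSpaceEquiv G y) ∈ EdgeEndSpace.nbhd F r := hx
  rw [Equiv.symm_apply_apply] at hx
  obtain ⟨a, rfl⟩ := Quot.exists_rep y
  have hra : EConn G F r a := (EdgeEndSpace.mk_mem_nbhd hF hFG).1 hx
  refine ⟨EndSpace.nbhd (vertexCut G F) (rayLift a), fun z hz => hpre z ?_,
    EndSpace.isOpen_nbhd (vertexCut_finite hF) _,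
    ⟨rayLift a, rfl, .refl (vertexCut_finite hF) _⟩⟩
  obtain ⟨y, rfl⟩ := (edgeEndSpaceEquiv G).surjective z
  rw [Equiv.symm_apply_apply]
  obtain ⟨b, rfl⟩ := Quot.exists_rep y
  have hab := (EndSpace.mk_mem_nbhd (vertexCut_finite hF)).1 hz
  exact (EdgeEndSpace.mk_mem_nbhd hF hFG).2 (hra.trans (eConn_of_vConn_rayLift hF hab))

end Homeomorph

/-- for every graph `G` there is a graph `H` whose end space is
homeomorphic to the edge-end space of `G`, and in which every vertex
edge-dominates at most one end. -/
theorem edgeEndSpace_homeo_endSpace {V : Type u} (G : SimpleGraph V) :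
    ∃ (W : Type u) (H : SimpleGraph W),
      Nonempty (EdgeEndSpace G ≃ₜ EndSpace H) ∧
      ∀ (w : W) (r s : GraphRay H),
        edgeDominates H w r → edgeDominates H w s → endEquiv H r s :=
  ⟨V × V, cliqueExpansion G,
    ⟨⟨edgeEndSpaceEquiv G, continuous_edgeEndSpaceEquiv G, continuous_edgeEndSpaceEquiv_symm G⟩⟩,
    fun _ _ _ hr hs =>
      endEquiv_of_edgeEndEquiv_cliqueExpansion (edgeEndEquiv_of_edgeDominates hr hs)⟩
end

section
/- Let G be a graph, let D be the set of vertices of G that edge-dominate some ray, and let H be obtained from G by replacing each v ∈ D with a clique K_v on d(v) vertices, each edge formerly incident to v being attached to a distinct vertex of K_v. If rays r and s of G can be separated by a finite set F of edges of G, then the corresponding rays ρ(r) and ρ(s) in H can be separated by the finite edge set ρ(F); in particular ρ(r) and ρ(s) lie in distinct ends of H. -/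
open SimpleGraph

universe u

/-- The set `D` of vertices of `G` that edge-dominate some ray. -/
def edgeDomSet {V : Type u} (G : SimpleGraph V) : Set V :=
  {v | ∃ r : GraphRay G, edgeDominates G v r}

/-- In the expansion `H` of `G` (each `v ∈ D` blown up to a clique with one vertex per
incident edge), the endpoint on the `v`-side of the former edge `vu`:
if `v ∈ D` it is the clique vertex `(v, u)`, otherwise it is `v` itself. -/
noncomputable def att {V : Type u} (G : SimpleGraph V) (v u : V) : V ⊕ (V × V) :=
  haveI := Classical.dec (v ∈ edgeDomSet G)
  if v ∈ edgeDomSet G then Sum.inr (v, u) else Sum.inl v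

/-- The expansion `H` of `G`: each edge `uv` of `G` becomes an edge between
`att G u v` and `att G v u`, and each expanded clique `K_v` is complete. -/
noncomputable def expandGraph {V : Type u} (G : SimpleGraph V) :
    SimpleGraph (V ⊕ (V × V)) :=
  SimpleGraph.fromRel (fun x y =>
    (∃ u v : V, G.Adj u v ∧ x = att G u v ∧ y = att G v u) ∨
    (∃ v a b : V, v ∈ edgeDomSet G ∧ G.Adj v a ∧ G.Adj v b ∧ a ≠ b ∧
      x = Sum.inr (v, a) ∧ y = Sum.inr (v, b)))

/-- The image `ρ(F)` of a set of edges of `G` under the natural edge injection. -/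
def rhoSet {V : Type u} (G : SimpleGraph V) (F : Set (Sym2 V)) :
    Set (Sym2 (V ⊕ (V × V))) :=
  {e | ∃ u v : V, s(u, v) ∈ F ∧ e = s(att G u v, att G v u)}

/-!
Collapsing every clique `K_v` of `H` back to `v` maps each edge of `H - ρ(F)` either to a vertex
(clique edges) or to an edge of `G - F`, so a path in `H - ρ(F)` between the tails of `ρ(r)` and
`ρ(s)` would project to a path in `G - F` between the tails of `r` and `s`. Deleting the finitely
many endpoints of `ρ(F)` deletes all of `ρ(F)`, which gives the vertex separation.
-/

section Sym2

variable {α : Type*}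

lemma Sym2.finite_setOf_mem (e : Sym2 α) : {x | x ∈ e}.Finite := by
  induction e using Sym2.ind with
  | _ a b =>
    refine ((Set.finite_singleton b).insert a).subset fun x hx => ?_
    simpa only [Set.mem_insert_iff, Set.mem_singleton_iff, Set.mem_ofPred_eq, Sym2.mem_iff]
      using hx

lemma Set.Finite.setOf_exists_mem_sym2 {E : Set (Sym2 α)} (hE : E.Finite) :
    {x | ∃ e ∈ E, x ∈ e}.Finite :=
  (hE.biUnion fun e _ => e.finite_setOf_mem).subset fun _ ⟨_, he, hx⟩ => Set.mem_biUnion he hx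

lemma Set.Finite.setOf_sym2_mk_mem {E : Set (Sym2 α)} (hE : E.Finite) :
    {p : α × α | s(p.1, p.2) ∈ E}.Finite :=
  (hE.setOf_exists_mem_sym2.prod hE.setOf_exists_mem_sym2).subset fun _ hp =>
    ⟨⟨_, hp, Sym2.mem_mk_left _ _⟩, ⟨_, hp, Sym2.mem_mk_right _ _⟩⟩

end Sym2

variable {V : Type u} {G : SimpleGraph V}

lemma SimpleGraph.vDel_le_eDel (G : SimpleGraph V) (E : Set (Sym2 V)) :
    G.vDel {x | ∃ e ∈ E, x ∈ e} ≤ G.eDel E :=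
  fun x y ⟨hxy, hx, _⟩ => ⟨hxy, fun hE => hx ⟨_, hE, Sym2.mem_mk_left x y⟩⟩

namespace GraphRay

lemma edge_injective (r : GraphRay G) : Function.Injective fun n => s(r.f n, r.f (n + 1)) := by
  intro n k h
  rcases Sym2.eq_iff.mp h with ⟨h₁, -⟩ | ⟨h₁, h₂⟩
  · exact r.inj h₁
  · have := r.inj h₁
    have := r.inj h₂
    omega

lemma eventually_edge_notMem (r : GraphRay G) {F : Set (Sym2 V)} (hF : F.Finite) :
    ∀ᶠ n in Filter.atTop, s(r.f n, r.f (n + 1)) ∉ F := by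
  rw [← Nat.cofinite_eq_atTop]
  exact (hF.preimage r.edge_injective.injOn).compl_mem_cofinite

end GraphRay

lemma rhoSet_finite {F : Set (Sym2 V)} (hF : F.Finite) : (rhoSet G F).Finite :=
  (hF.setOf_sym2_mk_mem.image fun p => s(att G p.1 p.2, att G p.2 p.1)).subset
    fun _ ⟨u, v, huv, he⟩ => ⟨(u, v), huv, he.symm⟩

def expandProj : V ⊕ (V × V) → V := Sum.elim id Prod.fst

@[simp]
lemma expandProj_att (v u : V) : expandProj (att G v u) = v := by
  unfold att
  split <;> rfl

variable {F : Set (Sym2 V)}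

lemma reachable_expandProj_of_adj {x y : V ⊕ (V × V)}
    (h : ((expandGraph G).eDel (rhoSet G F)).Adj x y) :
    (G.eDel F).Reachable (expandProj x) (expandProj y) := by
  obtain ⟨hadj, hx⟩ := h
  rw [expandGraph, fromRel_adj] at hadj
  rcases hadj.2 with (⟨u, v, huv, rfl, rfl⟩ | ⟨v, a, b, -, -, -, -, rfl, rfl⟩) |
    (⟨u, v, huv, rfl, rfl⟩ | ⟨v, a, b, -, -, -, -, rfl, rfl⟩)
  · simpa only [expandProj_att] using
      (show (G.eDel F).Adj u v from ⟨huv, fun h => hx ⟨u, v, h, rfl⟩⟩).reachable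
  · rfl
  · simpa only [expandProj_att] using
      (show (G.eDel F).Adj v u from ⟨huv.symm, fun h => hx ⟨v, u, h, rfl⟩⟩).reachable
  · rfl

lemma SimpleGraph.Reachable.expandProj {x y : V ⊕ (V × V)}
    (h : ((expandGraph G).eDel (rhoSet G F)).Reachable x y) :
    (G.eDel F).Reachable (expandProj x) (expandProj y) := by
  rw [reachable_iff_reflTransGen] at h ⊢
  exact h.lift' _ fun _ _ hab =>
    (reachable_iff_reflTransGen _ _).mp (reachable_expandProj_of_adj hab)

theorem expand_separates_general {V : Type u} (G : SimpleGraph V) (r s : GraphRay G)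
    (F : Set (Sym2 V)) (hF : F.Finite)
    (hsep : ¬ GraphRay.EConn G F r s) :
    (∃ N : ℕ, ∀ n m : ℕ, N ≤ n → N ≤ m →
      ¬ ((expandGraph G).eDel (rhoSet G F)).Reachable
          (att G (r.f n) (r.f (n + 1))) (att G (s.f m) (s.f (m + 1)))) ∧
    (∃ S : Set (V ⊕ (V × V)), S.Finite ∧ ∃ N : ℕ, ∀ n m : ℕ, N ≤ n → N ≤ m →
      ¬ ((expandGraph G).vDel S).Reachable
          (att G (r.f n) (r.f (n + 1))) (att G (s.f m) (s.f (m + 1)))) := by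
  obtain ⟨N, hN⟩ := Filter.eventually_atTop.mp
    ((r.eventually_edge_notMem hF).and (s.eventually_edge_notMem hF))
  have hsepH : ∀ n m : ℕ, N ≤ n → N ≤ m →
      ¬ ((expandGraph G).eDel (rhoSet G F)).Reachable
          (att G (r.f n) (r.f (n + 1))) (att G (s.f m) (s.f (m + 1))) := by
    intro n m hn hm h
    refine hsep ⟨n, m, fun k hk => (hN k (hn.trans hk)).1, fun k hk => (hN k (hm.trans hk)).2, ?_⟩
    simpa only [expandProj_att] using h.expandProj
  exact ⟨⟨N, hsepH⟩, _, (rhoSet_finite hF).setOf_exists_mem_sym2, N,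
    fun n m hn hm h => hsepH n m hn hm (h.mono (vDel_le_eDel _ _))⟩

/-- if a finite edge set `F` separates the rays `r` and `s` in `G`, then
`ρ(F)` separates the corresponding rays `ρ(r)` and `ρ(s)` in the expansion `H`
(their tails lie in different components of `H - ρ(F)`); in particular `ρ(r)` and
`ρ(s)` lie in distinct ends of `H` (some finite vertex set separates their tails). -/
theorem expand_separates {V : Type u} (G : SimpleGraph V) (r s : GraphRay G)
    (F : Set (Sym2 V)) (hF : F.Finite) (hFE : F ⊆ G.edgeSet)
    (hsep : ¬ GraphRay.EConn G F r s) :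
    (∃ N : ℕ, ∀ n m : ℕ, N ≤ n → N ≤ m →
      ¬ ((expandGraph G).eDel (rhoSet G F)).Reachable
          (att G (r.f n) (r.f (n + 1))) (att G (s.f m) (s.f (m + 1)))) ∧
    (∃ S : Set (V ⊕ (V × V)), S.Finite ∧ ∃ N : ℕ, ∀ n m : ℕ, N ≤ n → N ≤ m →
      ¬ ((expandGraph G).vDel S).Reachable
          (att G (r.f n) (r.f (n + 1))) (att G (s.f m) (s.f (m + 1)))) :=
  expand_separates_general G r s F hF hsep
end
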